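/- f(6) = 10 and d(6) = 26: the minimum number of fragments in a fragment tiling of the 6 × 6 board S₆ is 10, and the maximum number of dominoes in a saturated domino covering of S₆ is 26. -/

import Mathlib

/-- A cell of the square grid. -/
abbrev Cell : Type := ℤ × ℤ

/-- Two cells are adjacent iff they differ by 1 in exactly one coordinate. -/
def Adj (p q : Cell) : Prop := |p.1 - q.1| + |p.2 - q.2| = 1

/-- A board: a finite nonempty set of cells, each adjacent to another cell of the board. -/
def IsBoard (B : Set Cell) : Prop :=
  B.Finite ∧ B.Nonempty ∧ ∀ p ∈ B, ∃ q ∈ B, Adj p q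

/-- A domino of `B`: a two-element subset of `B` whose cells are adjacent. -/
def IsDomino (B : Set Cell) (e : Finset Cell) : Prop :=
  ∃ p q : Cell, p ∈ B ∧ q ∈ B ∧ Adj p q ∧ e = {p, q}

/-- A domino covering of `B`: a finite set of dominoes of `B` whose union is `B`. -/
def IsDominoCovering (B : Set Cell) (D : Finset (Finset Cell)) : Prop :=
  (∀ e ∈ D, IsDomino B e) ∧ (⋃ e ∈ D, (↑e : Set Cell)) = B

/-- A saturated domino covering: removing any domino leaves some cell uncovered. -/
def IsSaturatedCovering (B : Set Cell) (D : Finset (Finset Cell)) : Prop :=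
  IsDominoCovering B D ∧ ∀ e ∈ D, (⋃ e' ∈ D.erase e, (↑e' : Set Cell)) ⊂ B

/-- `dNum B` is the maximum number of dominoes in a saturated domino covering of `B`. -/
noncomputable def dNum (B : Set Cell) : ℕ :=
  sSup {k : ℕ | ∃ D : Finset (Finset Cell), IsSaturatedCovering B D ∧ D.card = k}

/-- The X-pentomino centered at `c`: the cell `c` together with its four adjacent cells. -/
def Xpent (c : Cell) : Set Cell :=
  {c, (c.1 + 1, c.2), (c.1 - 1, c.2), (c.1, c.2 + 1), (c.1, c.2 - 1)}

/-- A set of cells is connected under adjacency. -/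
def ConnectedUnderAdj (F : Set Cell) : Prop :=
  ∀ p ∈ F, ∀ q ∈ F, Relation.ReflTransGen (fun a b => a ∈ F ∧ b ∈ F ∧ Adj a b) p q

/-- A fragment: a connected subset of some X-pentomino with at least two cells. -/
def IsFragment (F : Set Cell) : Prop :=
  (∃ c : Cell, F ⊆ Xpent c) ∧ 2 ≤ F.ncard ∧ ConnectedUnderAdj F

/-- A fragment tiling of `B`: a partition of `B` into pairwise disjoint fragments. -/
def IsFragmentTiling (B : Set Cell) (T : Finset (Set Cell)) : Prop :=
  (∀ F ∈ T, IsFragment F) ∧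
  (∀ F ∈ T, ∀ G ∈ T, F ≠ G → Disjoint F G) ∧
  (⋃ F ∈ T, F) = B

/-- `fNum B` is the minimum number of fragments in a fragment tiling of `B`. -/
noncomputable def fNum (B : Set Cell) : ℕ :=
  sInf {k : ℕ | ∃ T : Finset (Set Cell), IsFragmentTiling B T ∧ T.card = k}

/-- `xNum B` is the minimum number of X-pentominoes (centered anywhere, allowed to
overlap and to extend outside `B`) whose union covers `B`. -/
noncomputable def xNum (B : Set Cell) : ℕ :=
  sInf {k : ℕ | ∃ C : Finset Cell, B ⊆ (⋃ c ∈ C, Xpent c) ∧ C.card = k}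

/-- The `n × n` board `{0, …, n-1} × {0, …, n-1}`. -/
def Sq (n : ℕ) : Set Cell := {p : Cell | 0 ≤ p.1 ∧ p.1 < n ∧ 0 ≤ p.2 ∧ p.2 < n}

/-!
Both numbers are controlled by the domination number of the 6 × 6 grid, which is 10.
Replacing every fragment of a tiling by the X-pentomino around its centre gives a cover of
the board by X-pentominoes, so `f(6) ≥ 10`. In a saturated covering `D` every domino owns a
private cell; choosing one in each domino, the remaining `36 - |D|` cells dominate the board,
since a chosen cell is adjacent to the other cell of its domino, which is not chosen. Hence
`|D| ≤ 26`. That no nine X-pentominoes cover the board is checked by an exhaustive search, and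
explicit configurations attain both bounds.
-/

theorem Adj.symm {p q : Cell} (h : Adj p q) : Adj q p := by
  unfold Adj at *
  rwa [abs_sub_comm q.1, abs_sub_comm q.2]

theorem Adj.ne {p q : Cell} (h : Adj p q) : p ≠ q := by
  rintro rfl
  simp [Adj] at h

instance : DecidableRel Adj := fun p q => by unfold Adj; infer_instance

theorem mem_Xpent_iff {c q : Cell} : q ∈ Xpent c ↔ q = c ∨ Adj c q := by
  obtain ⟨a, b⟩ := c
  obtain ⟨x, y⟩ := q
  simp only [Xpent, Adj, Set.mem_insert_iff, Set.mem_singleton_iff, Prod.mk.injEq]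
  rcases abs_cases (a - x) with ⟨h1, _⟩ | ⟨h1, _⟩ <;>
    rcases abs_cases (b - y) with ⟨h2, _⟩ | ⟨h2, _⟩ <;> rw [h1, h2] <;> omega

theorem mem_Xpent_comm {c q : Cell} : q ∈ Xpent c ↔ c ∈ Xpent q := by
  simp only [mem_Xpent_iff, eq_comm (a := q)]
  exact or_congr_right ⟨Adj.symm, Adj.symm⟩

theorem mem_Xpent_self (c : Cell) : c ∈ Xpent c :=
  mem_Xpent_iff.2 (Or.inl rfl)

def xList (c : Cell) : List Cell :=
  [c, (c.1 + 1, c.2), (c.1 - 1, c.2), (c.1, c.2 + 1), (c.1, c.2 - 1)]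

theorem mem_xList {c q : Cell} : q ∈ xList c ↔ q ∈ Xpent c := by
  simp [xList, Xpent]

instance (c q : Cell) : Decidable (q ∈ Xpent c) :=
  decidable_of_iff _ mem_xList

def sqList (n : ℕ) : List Cell :=
  (List.range n).flatMap fun y : ℕ => (List.range n).map fun x : ℕ => ((x : ℤ), (y : ℤ))

theorem mem_sqList {n : ℕ} {p : Cell} : p ∈ sqList n ↔ p ∈ Sq n := by
  obtain ⟨x, y⟩ := p
  simp only [sqList, List.mem_flatMap, List.mem_map, List.mem_range, Prod.mk.injEq, Sq,
    Set.mem_ofPred_eq]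
  constructor
  · rintro ⟨y, hy, x, hx, rfl, rfl⟩
    omega
  · rintro ⟨hx0, hx, hy0, hy⟩
    exact ⟨y.toNat, by omega, x.toNat, by omega, by omega, by omega⟩

theorem coe_toFinset_sqList (n : ℕ) : ((sqList n).toFinset : Set Cell) = Sq n := by
  ext p
  simp [mem_sqList]

theorem nodup_sqList (n : ℕ) : (sqList n).Nodup := by
  refine List.nodup_flatMap.2 ⟨fun y _ => ?_, ?_⟩
  · exact (List.nodup_range).map fun a b h => by simpa using h
  · refine List.nodup_range.pairwise_of_forall_ne fun a _ b _ hab => ?_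
    simp only [Function.onFun, List.disjoint_left, List.mem_map]
    rintro _ ⟨x, -, rfl⟩ ⟨x', -, h⟩
    exact hab (by simpa using (Prod.ext_iff.1 h).2.symm)

theorem isFragment_of_center_mem {F : Set Cell} {c : Cell} (hc : c ∈ F) (hF : F ⊆ Xpent c)
    (h2 : 2 ≤ F.ncard) : IsFragment F := by
  refine ⟨⟨c, hF⟩, h2, fun p hp q hq => ?_⟩
  have toCenter : ∀ p ∈ F, Relation.ReflTransGen (fun a b => a ∈ F ∧ b ∈ F ∧ Adj a b) p c := by
    intro p hp
    rcases mem_Xpent_iff.1 (hF hp) with rfl | hadj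
    · exact .refl
    · exact .single ⟨hp, hc, hadj.symm⟩
  have fromCenter : ∀ q ∈ F, Relation.ReflTransGen (fun a b => a ∈ F ∧ b ∈ F ∧ Adj a b) c q := by
    intro q hq
    rcases mem_Xpent_iff.1 (hF hq) with rfl | hadj
    · exact .refl
    · exact .single ⟨hc, hq, hadj⟩
  exact (toCenter p hp).trans (fromCenter q hq)

theorem IsFragmentTiling.exists_xpent_cover {B : Set Cell} {T : Finset (Set Cell)}
    (h : IsFragmentTiling B T) : ∃ C : Finset Cell, C.card ≤ T.card ∧ B ⊆ ⋃ c ∈ C, Xpent c := by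
  classical
  choose! c hc using fun F hF => (h.1 F hF).1
  refine ⟨T.image c, Finset.card_image_le, ?_⟩
  rw [← h.2.2]
  simp only [Set.iUnion_subset_iff]
  intro F hF x hx
  exact Set.mem_biUnion (Finset.mem_image_of_mem c hF) (hc F hF hx)

theorem isFragmentTiling_map_coe {S : Finset Cell} {T : Finset (Finset Cell)}
    (hcenter : ∀ F ∈ T, ∃ c ∈ F, ∀ q ∈ F, q ∈ Xpent c) (hcard : ∀ F ∈ T, 2 ≤ F.card)
    (hdisj : ∀ F ∈ T, ∀ G ∈ T, F ≠ G → Disjoint F G) (hunion : T.biUnion id = S) :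
    IsFragmentTiling S (T.map ⟨(↑), Finset.coe_injective⟩) := by
  simp only [IsFragmentTiling, Finset.mem_map, Function.Embedding.coeFn_mk, forall_exists_index,
    and_imp, forall_apply_eq_imp_iff₂]
  refine ⟨fun F hF => ?_, fun F hF G hG hne => ?_, ?_⟩
  · obtain ⟨c, hc, hsub⟩ := hcenter F hF
    exact isFragment_of_center_mem hc hsub (by simpa using hcard F hF)
  · exact Finset.disjoint_coe.2 (hdisj F hF G hG fun h => hne (h ▸ rfl))
  · rw [← hunion, Finset.coe_biUnion]
    ext x
    simp

theorem IsDomino.exists_partner {B : Set Cell} {e : Finset Cell} {x : Cell} (h : IsDomino B e)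
    (hx : x ∈ e) : ∃ v ∈ e, v ≠ x ∧ x ∈ Xpent v := by
  obtain ⟨p, q, -, -, hpq, rfl⟩ := h
  rcases Finset.mem_insert.1 hx with rfl | hx
  · exact ⟨q, by simp, hpq.ne.symm, mem_Xpent_iff.2 (Or.inr hpq.symm)⟩
  · obtain rfl := Finset.mem_singleton.1 hx
    exact ⟨p, by simp, hpq.ne, mem_Xpent_iff.2 (Or.inr hpq)⟩

theorem isSaturatedCovering_iff {B : Set Cell} {D : Finset (Finset Cell)}
    (h : IsDominoCovering B D) :
    IsSaturatedCovering B D ↔ ∀ e ∈ D, ∃ u ∈ e, ∀ e' ∈ D, u ∈ e' → e' = e := by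
  have hsub : ∀ e, (⋃ e' ∈ D.erase e, (e' : Set Cell)) ⊆ B := fun e => h.2 ▸
    Set.biUnion_subset_biUnion_left fun e' he' => Finset.mem_of_mem_erase he'
  rw [IsSaturatedCovering, and_iff_right h]
  refine forall₂_congr fun e he => ?_
  rw [Set.ssubset_iff_of_subset (hsub e)]
  constructor
  · rintro ⟨u, huB, hu⟩
    have private_u : ∀ e' ∈ D, u ∈ e' → e' = e := fun e' he' hue' => by_contra fun hne =>
      hu (Set.mem_iUnion₂.2 ⟨e', Finset.mem_erase.2 ⟨hne, he'⟩, hue'⟩)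
    obtain ⟨e'', he'', hue''⟩ := Set.mem_iUnion₂.1 (h.2.symm ▸ huB)
    exact ⟨u, private_u e'' he'' hue'' ▸ hue'', private_u⟩
  · rintro ⟨u, hue, hu⟩
    refine ⟨u, h.2 ▸ Set.mem_iUnion₂.2 ⟨e, he, hue⟩, fun hmem => ?_⟩
    obtain ⟨e', he', hue'⟩ := Set.mem_iUnion₂.1 hmem
    exact (Finset.mem_erase.1 he').1 (hu e' (Finset.mem_of_mem_erase he') hue')

theorem isDominoCovering_of_finset {S : Finset Cell} {D : Finset (Finset Cell)}
    (hdom : ∀ e ∈ D, ∃ p ∈ e, ∃ q ∈ e, Adj p q ∧ e = {p, q}) (hunion : D.biUnion id = S) :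
    IsDominoCovering S D := by
  refine ⟨fun e he => ?_, by rw [← hunion, Finset.coe_biUnion]; rfl⟩
  obtain ⟨p, hp, q, hq, hpq, rfl⟩ := hdom e he
  have hsub : ({p, q} : Finset Cell) ⊆ S := hunion ▸ Finset.subset_biUnion_of_mem id he
  exact ⟨p, q, hsub hp, hsub hq, hpq, rfl⟩

theorem IsSaturatedCovering.exists_xpent_cover {S : Finset Cell} {D : Finset (Finset Cell)}
    (h : IsSaturatedCovering S D) :
    ∃ C : Finset Cell, C.card + D.card = S.card ∧ (S : Set Cell) ⊆ ⋃ c ∈ C, Xpent c := by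
  classical
  obtain ⟨hdom, hunion⟩ := h.1
  choose! u hue hpriv using (isSaturatedCovering_iff h.1).1 h
  have hS : ∀ e ∈ D, ∀ x ∈ e, x ∈ S := fun e he x hx =>
    Finset.mem_coe.1 (hunion ▸ Set.mem_biUnion he hx)
  have hPS : D.image u ⊆ S := Finset.image_subset_iff.2 fun e he => hS e he _ (hue e he)
  have hinj : Set.InjOn u D := fun e₁ he₁ e₂ he₂ h12 => hpriv e₂ he₂ e₁ he₁ (h12 ▸ hue e₁ he₁)
  refine ⟨S \ D.image u, ?_, fun x hx => ?_⟩
  · rw [← Finset.card_image_of_injOn hinj, Finset.card_sdiff_add_card_eq_card hPS]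
  have hxS : x ∈ S := hx
  by_cases hxP : x ∈ D.image u
  · obtain ⟨e, he, rfl⟩ := Finset.mem_image.1 hxP
    obtain ⟨v, hve, hvx, hxv⟩ := (hdom e he).exists_partner (hue e he)
    have hvP : v ∉ D.image u := by
      intro hvP
      obtain ⟨e', he', rfl⟩ := Finset.mem_image.1 hvP
      exact hvx (congrArg u (hpriv e' he' e he hve)).symm
    exact Set.mem_biUnion (Finset.mem_sdiff.2 ⟨hS e he v hve, hvP⟩) hxv
  · exact Set.mem_biUnion (Finset.mem_sdiff.2 ⟨hxS, hxP⟩) (mem_Xpent_self x)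

theorem length_le_of_forall_mem_xpent {U : List Cell} {C : Finset Cell} (hU : U.Nodup)
    (h : ∀ p ∈ U, ∃ c ∈ C, p ∈ Xpent c) : U.length ≤ 5 * C.card := by
  have hsub : U.toFinset ⊆ C.biUnion fun c => (xList c).toFinset := fun p hp => by
    obtain ⟨c, hc, hpc⟩ := h p (List.mem_toFinset.1 hp)
    exact Finset.mem_biUnion.2 ⟨c, hc, List.mem_toFinset.2 (mem_xList.2 hpc)⟩
  calc U.length = U.toFinset.card := (List.toFinset_card_of_nodup hU).symm
    _ ≤ C.card * 5 := (Finset.card_le_card hsub).trans <|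
        Finset.card_biUnion_le_card_mul _ _ _ fun c _ => List.toFinset_card_le _
    _ = 5 * C.card := mul_comm _ _

/-- Exhaustive search: can `k` X-pentominoes cover the cells of `U`? A pentomino covering the
first cell `p` is centred in `Xpent p`, and `k` pentominoes cover at most `5 * k` cells. -/
def xCoverable : ℕ → List Cell → Bool
  | _, [] => true
  | 0, _ :: _ => false
  | k + 1, p :: U =>
    decide (U.length < 5 * (k + 1)) &&
      (xList p).any fun c => xCoverable k (U.filter fun q => q ∉ Xpent c)

theorem xCoverable_eq_true {k : ℕ} {U : List Cell} {C : Finset Cell} (hU : U.Nodup)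
    (hC : C.card ≤ k) (h : ∀ p ∈ U, ∃ c ∈ C, p ∈ Xpent c) : xCoverable k U = true := by
  classical
  induction k generalizing U C with
  | zero =>
    cases U with
    | nil => rfl
    | cons p U =>
      obtain ⟨c, hc, -⟩ := h p List.mem_cons_self
      exact absurd hC (Finset.card_pos.2 ⟨c, hc⟩).not_ge
  | succ k ih =>
    cases U with
    | nil => rfl
    | cons p U =>
      have hlen := length_le_of_forall_mem_xpent hU h
      obtain ⟨c, hc, hpc⟩ := h p List.mem_cons_self
      simp only [xCoverable, Bool.and_eq_true, decide_eq_true_eq, List.any_eq_true]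
      refine ⟨by simp only [List.length_cons] at hlen; omega, c,
        mem_xList.2 (mem_Xpent_comm.1 hpc), ih (C := C.erase c) ?_ ?_ ?_⟩
      · exact (List.nodup_cons.1 hU).2.filter _
      · rw [Finset.card_erase_of_mem hc]
        omega
      · intro q hq
        simp only [List.mem_filter, decide_eq_true_eq] at hq
        obtain ⟨c', hc', hqc'⟩ := h q (List.mem_cons_of_mem _ hq.1)
        exact ⟨c', Finset.mem_erase.2 ⟨fun hcc => hq.2 (hcc ▸ hqc'), hc'⟩, hqc'⟩

set_option maxRecDepth 100000 in
theorem xCoverable_nine_sqList_six : xCoverable 9 (sqList 6) = false := by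
  decide +kernel

theorem ten_le_card_of_sq_six_subset {C : Finset Cell} (h : Sq 6 ⊆ ⋃ c ∈ C, Xpent c) :
    10 ≤ C.card := by
  by_contra! hC
  refine absurd xCoverable_nine_sqList_six (Bool.eq_false_iff.not.2 (not_not.2 ?_))
  refine xCoverable_eq_true (nodup_sqList 6) (Nat.le_of_lt_succ hC) fun p hp => ?_
  simpa using h (mem_sqList.1 hp)

def tiling10 : Finset (Finset Cell) :=
  {{(0, 0), (1, 0)}, {(2, 0), (3, 0), (4, 0)}, {(5, 0), (4, 1), (5, 1)},
   {(0, 1), (1, 1), (2, 1), (1, 2)}, {(3, 1), (2, 2), (3, 2), (4, 2), (3, 3)},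
   {(0, 2), (0, 3), (1, 3)}, {(5, 2), (4, 3), (5, 3), (5, 4)},
   {(2, 3), (1, 4), (2, 4), (3, 4), (2, 5)}, {(0, 4), (0, 5), (1, 5)},
   {(4, 4), (3, 5), (4, 5), (5, 5)}}

theorem isFragmentTiling_tiling10 :
    IsFragmentTiling (Sq 6) (tiling10.map ⟨(↑), Finset.coe_injective⟩) := by
  rw [← coe_toFinset_sqList]
  exact isFragmentTiling_map_coe (by decide) (by decide) (by decide) (by decide)

def covering26 : Finset (Finset Cell) :=
  {{(0, 0), (1, 0)}, {(0, 0), (0, 1)}, {(2, 0), (3, 0)}, {(2, 0), (2, 1)},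
   {(4, 0), (5, 0)}, {(1, 1), (1, 2)}, {(3, 1), (4, 1)}, {(4, 1), (5, 1)},
   {(4, 1), (4, 2)}, {(0, 2), (1, 2)}, {(1, 2), (2, 2)}, {(1, 2), (1, 3)},
   {(3, 2), (3, 3)}, {(5, 2), (5, 3)}, {(0, 3), (0, 4)}, {(2, 3), (3, 3)},
   {(3, 3), (4, 3)}, {(3, 3), (3, 4)}, {(5, 3), (5, 4)}, {(0, 4), (1, 4)},
   {(0, 4), (0, 5)}, {(2, 4), (2, 5)}, {(4, 4), (4, 5)}, {(1, 5), (2, 5)},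
   {(2, 5), (3, 5)}, {(4, 5), (5, 5)}}

theorem isSaturatedCovering_covering26 : IsSaturatedCovering (Sq 6) covering26 := by
  rw [← coe_toFinset_sqList]
  have hcov := isDominoCovering_of_finset (S := (sqList 6).toFinset) (D := covering26)
    (by decide) (by decide)
  exact (isSaturatedCovering_iff hcov).2 (by decide)

/-- `f(6) = 10` and `d(6) = 26` for the 6 × 6 board. -/
theorem fNum_dNum_6 : fNum (Sq 6) = 10 ∧ dNum (Sq 6) = 26 := by
  have htiling : 10 ∈ {k | ∃ T, IsFragmentTiling (Sq 6) T ∧ T.card = k} :=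
    ⟨_, isFragmentTiling_tiling10, by rw [Finset.card_map]; decide⟩
  have hcovering : 26 ∈ {k | ∃ D, IsSaturatedCovering (Sq 6) D ∧ D.card = k} :=
    ⟨_, isSaturatedCovering_covering26, by decide⟩
  have hfrag : ∀ k ∈ {k | ∃ T, IsFragmentTiling (Sq 6) T ∧ T.card = k}, 10 ≤ k := by
    rintro k ⟨T, hT, rfl⟩
    obtain ⟨C, hCT, hC⟩ := hT.exists_xpent_cover
    exact (ten_le_card_of_sq_six_subset hC).trans hCT
  have hsat : ∀ k ∈ {k | ∃ D, IsSaturatedCovering (Sq 6) D ∧ D.card = k}, k ≤ 26 := by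
    rintro k ⟨D, hD, rfl⟩
    rw [← coe_toFinset_sqList] at hD
    obtain ⟨C, hcard, hC⟩ := hD.exists_xpent_cover
    have h10 := ten_le_card_of_sq_six_subset (coe_toFinset_sqList 6 ▸ hC)
    have h36 : (sqList 6).toFinset.card = 36 := by decide
    omega
  exact ⟨le_antisymm (Nat.sInf_le htiling) (le_csInf ⟨10, htiling⟩ hfrag),
    le_antisymm (csSup_le ⟨26, hcovering⟩ hsat) (le_csSup ⟨26, hsat⟩ hcovering)⟩
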